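/- arXiv:1009.2277 — 2 statements merged into one kernel-verified Lean document; each statement's English description precedes it below -/
import Mathlib

section
/- There exists a set P ⊆ ℕ such that the spacing shift σ_P : Σ_P → Σ_P is multi-transitive but not weakly mixing. -/
open Set Function

/-- A continuous self-map is topologically transitive if every pair of nonempty
open sets is connected by some positive iterate. -/
def TopTransitive {X : Type*} [TopologicalSpace X] (f : X → X) : Prop :=
  ∀ U V : Set X, IsOpen U → IsOpen V → U.Nonempty → V.Nonempty →
    ∃ n : ℕ, 0 < n ∧ (f^[n] '' U ∩ V).Nonempty

/-- The map `f^{(∗m)} = f × f² × ⋯ × f^m` acting on `X^m` (coordinates indexed by `Fin m`,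
where coordinate `i` is moved by `f^[i+1]`). -/
def starMap {X : Type*} (f : X → X) (m : ℕ) : (Fin m → X) → (Fin m → X) :=
  fun x i => f^[(i : ℕ) + 1] (x i)

/-- `f` is weakly mixing if `f × f` is topologically transitive. -/
def WeaklyMixing {X : Type*} [TopologicalSpace X] (f : X → X) : Prop :=
  TopTransitive (fun p : X × X => (f p.1, f p.2))

/-- `f` is multi-transitive if `f × f² × ⋯ × f^m` is topologically transitive
for every `m ≥ 1`. -/
def MultiTransitive {X : Type*} [TopologicalSpace X] (f : X → X) : Prop :=
  ∀ m : ℕ, 1 ≤ m → TopTransitive (starMap f m)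

/-- `f` is Δ-transitive if for each `m ≥ 1` there is a residual set `Y ⊆ X` such that
for every `x ∈ Y` the diagonal tuple `(x, …, x)` has dense orbit under `f × f² × ⋯ × f^m`. -/
def DeltaTransitive {X : Type*} [TopologicalSpace X] (f : X → X) : Prop :=
  ∀ m : ℕ, 1 ≤ m → ∃ Y : Set X, Y ∈ residual X ∧
    ∀ x ∈ Y, Dense (Set.range fun n : ℕ => (starMap f m)^[n] (fun _ : Fin m => x))

/-- A set `S ⊆ ℕ` is syndetic if there is `L > 0` with `[n, n+L] ∩ S ≠ ∅` for every `n`. -/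
def Syndetic (S : Set ℕ) : Prop :=
  ∃ L : ℕ, 0 < L ∧ ∀ n : ℕ, ∃ k ∈ S, n ≤ k ∧ k ≤ n + L

/-- `N(U,V;f) = {n > 0 : f^n(U) ∩ V ≠ ∅}`. -/
def NSet {X : Type*} (f : X → X) (U V : Set X) : Set ℕ :=
  {n | 0 < n ∧ (f^[n] '' U ∩ V).Nonempty}

/-- `f` is syndetically transitive if `N(U,V;f)` is syndetic for all nonempty open `U, V`. -/
def SyndeticallyTransitive {X : Type*} [TopologicalSpace X] (f : X → X) : Prop :=
  ∀ U V : Set X, IsOpen U → IsOpen V → U.Nonempty → V.Nonempty → Syndetic (NSet f U V)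

/-- `f` is strongly transitive if for every nonempty open `U` there is `M > 0` with
`⋃_{j=1}^M f^j(U) = X`. -/
def StronglyTransitive {X : Type*} [TopologicalSpace X] (f : X → X) : Prop :=
  ∀ U : Set X, IsOpen U → U.Nonempty →
    ∃ M : ℕ, 0 < M ∧ (⋃ j ∈ Finset.Icc 1 M, f^[j] '' U) = Set.univ

/-- `f` is minimal if the only nonempty closed `f`-invariant subset is the whole space. -/
def MinimalMap {X : Type*} [TopologicalSpace X] (f : X → X) : Prop :=
  ∀ K : Set X, IsClosed K → K.Nonempty → f '' K ⊆ K → K = Set.univ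

/-- The spacing shift `Σ_P ⊆ {0,1}^ℕ`: all sequences such that whenever two distinct
positions carry the symbol `1`, the distance between them lies in `P`. -/
def SpacingSubshift (P : Set ℕ) : Set (ℕ → Bool) :=
  {x | ∀ i j : ℕ, i < j → x i = true → x j = true → j - i ∈ P}

theorem shift_mem_spacingSubshift {P : Set ℕ} {x : ℕ → Bool}
    (hx : x ∈ SpacingSubshift P) : (fun n => x (n + 1)) ∈ SpacingSubshift P := by
  intro i j hij hi hj
  have h := hx (i + 1) (j + 1) (by omega) hi hj
  have : j + 1 - (i + 1) = j - i := by omega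
  rwa [this] at h

/-- The shift map `σ_P : Σ_P → Σ_P` of the spacing shift. -/
def sigmaP (P : Set ℕ) : SpacingSubshift P → SpacingSubshift P :=
  fun x => ⟨fun n => x.1 (n + 1), shift_mem_spacingSubshift x.2⟩

/-- The cylinder `[1]_P` of points of `Σ_P` whose 0th coordinate is `1`. -/
def oneCyl (P : Set ℕ) : Set (SpacingSubshift P) := {x | x.1 0 = true}

/-- A set `P ⊆ ℕ` is thick if it contains arbitrarily long intervals of
consecutive integers. -/
def Thick (P : Set ℕ) : Prop :=
  ∀ n : ℕ, ∃ k : ℕ, Set.Ico k (k + n) ⊆ P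

/-- `P(m) = ⋃_{k ≥ 1} {m^{2k-1}, …, m^{2k} - 1}`. -/
def ProgressionSet (m : ℕ) : Set ℕ :=
  {n | ∃ k : ℕ, 1 ≤ k ∧ m ^ (2 * k - 1) ≤ n ∧ n < m ^ (2 * k)}

/-!
Enumerate all pairs `(N, [D₀, …, D_{m-1}])` with `Dᵢ` finite sets of integers by a surjection
`T : ℕ → ℕ × List (Finset ℤ)`, and let `P` be the union of blocks, the `c`-th block being
`⋃ᵢ ((i + 1) n_c + Dᵢ)` (over the `Dᵢ` without two consecutive elements, truncated to `(-N, N)`),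
with scales `n_c` growing so fast that distinct blocks and the pieces of one block lie at distance
at least two. Then `P` has no two consecutive elements and `1 ∉ P`.

No two consecutive elements rules out weak mixing: moving `[1] × [1]` into `[1] × [01]` under
`σ_P × σ_P` requires `n, n + 1 ∈ P`. For multi-transitivity, given `P`-admissible words `uᵢ, vᵢ` of
length `N`, the difference sets `Dᵢ = supp vᵢ - supp uᵢ` contain no two consecutive integers
(because `P` has no two consecutive elements and misses `1`), so some block contains every
`(i + 1) n + Dᵢ`; writing `uᵢ` at `0` and `vᵢ` at `(i + 1) n` then gives admissible points, and `n`
is a common return time for `σ_P × σ_P² × ⋯ × σ_P^m`.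
-/

def NoConsecutive {α : Type*} [Add α] [One α] (s : Set α) : Prop := ∀ a ∈ s, a + 1 ∉ s

section SpacingShift

variable {P : Set ℕ}

theorem sigmaP_iterate_apply (k : ℕ) (x : SpacingSubshift P) (j : ℕ) :
    ((sigmaP P)^[k] x).1 j = x.1 (j + k) := by
  induction k generalizing x with
  | zero => rfl
  | succ k ih => rw [iterate_succ_apply, ih]; rfl

theorem starMap_iterate_apply {X : Type*} (f : X → X) (m n : ℕ) (x : Fin m → X) (i : Fin m) :
    ((starMap f m)^[n] x) i = f^[((i : ℕ) + 1) * n] (x i) := by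
  induction n generalizing x with
  | zero => rfl
  | succ n ih => rw [iterate_succ_apply, ih, starMap, ← iterate_add_apply, mul_add_one]

theorem isOpen_setOf_apply_eq_true (k : ℕ) :
    IsOpen {x : SpacingSubshift P | x.1 k = true} := by
  have hk : Continuous fun x : SpacingSubshift P => x.1 k :=
    (continuous_apply k).comp continuous_subtype_val
  exact hk.isOpen_preimage {true} (isOpen_discrete _)

theorem exists_forall_lt_eq_mem_of_isOpen {S : Set (ℕ → Bool)} {O : Set S} (hO : IsOpen O)
    {u : S} (hu : u ∈ O) : ∃ N, ∀ y : S, (∀ j < N, y.1 j = u.1 j) → y ∈ O := by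
  obtain ⟨O', hO', rfl⟩ := isOpen_induced_iff.1 hO
  obtain ⟨_, ⟨x, N, rfl⟩, hux, hsub⟩ :=
    (PiNat.isTopologicalBasis_cylinders _).exists_subset_of_mem_open hu hO'
  rw [← PiNat.mem_cylinder_iff_eq.1 hux] at hsub
  exact ⟨N, fun y hy => hsub (PiNat.mem_cylinder_iff.2 hy)⟩

theorem exists_forall_lt_eq_mem_of_isOpen_pi {ι : Type*} {S : Set (ℕ → Bool)} {U : Set (ι → S)}
    (hU : IsOpen U) {u : ι → S} (hu : u ∈ U) :
    ∃ N, ∀ y : ι → S, (∀ i, ∀ j < N, (y i).1 j = (u i).1 j) → y ∈ U := by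
  obtain ⟨I, W, hW, hsub⟩ := isOpen_pi_iff.1 hU u hu
  choose! N hN using fun i hi => exists_forall_lt_eq_mem_of_isOpen (hW i hi).1 (hW i hi).2
  exact ⟨I.sup N, fun y hy => hsub fun i hi =>
    hN i hi (y i) fun j hj => hy i j (hj.trans_le (Finset.le_sup hi))⟩

theorem single_mem_spacingSubshift (k : ℕ) : (fun j => decide (j = k)) ∈ SpacingSubshift P := by
  intro i j hij hi hj
  simp only [decide_eq_true_eq] at hi hj
  omega

def glue (N n : ℕ) (x y : ℕ → Bool) : ℕ → Bool :=
  fun j => if j < N then x j else if n ≤ j ∧ j < n + N then y (j - n) else false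

theorem glue_of_lt {N n j : ℕ} (x y : ℕ → Bool) (hj : j < N) : glue N n x y j = x j :=
  if_pos hj

theorem glue_add {N n j : ℕ} (x y : ℕ → Bool) (hNn : N ≤ n) (hj : j < N) :
    glue N n x y (j + n) = y j := by
  simp [glue, show ¬ j + n < N by omega, show j + n < n + N by omega]

theorem glue_mem_spacingSubshift {N n : ℕ} {x y : ℕ → Bool}
    (hx : x ∈ SpacingSubshift P) (hy : y ∈ SpacingSubshift P) (hNn : N ≤ n)
    (hxy : ∀ a < N, ∀ b < N, x a = true → y b = true → n + b - a ∈ P) :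
    glue N n x y ∈ SpacingSubshift P := by
  intro i j hij hi hj
  unfold glue at hi hj
  split_ifs at hi hj with hiN hjN hj' hi'
  · exact hx i j hij hi hj
  · simpa [show n + (j - n) - i = j - i by omega] using hxy i hiN (j - n) (by omega) hi hj
  · omega
  · simpa [show j - n - (i - n) = j - i by omega] using hy (i - n) (j - n) (by omega) hi hj

theorem sub_ne_sub_add_one_of_mem_spacingSubshift (h₁ : 1 ∉ P) (hP : NoConsecutive P)
    {x y : ℕ → Bool} (hx : x ∈ SpacingSubshift P) (hy : y ∈ SpacingSubshift P) {a a' b b' : ℕ}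
    (ha : x a = true) (ha' : x a' = true) (hb : y b = true) (hb' : y b' = true) :
    (b' : ℤ) - a' ≠ b - a + 1 := by
  intro h
  rcases lt_trichotomy a a' with haa | rfl | haa <;>
    rcases lt_trichotomy b b' with hbb | rfl | hbb
  · have := hy b b' hbb hb hb'
    exact hP _ (hx a a' haa ha ha') (by rwa [show b' - b = a' - a + 1 by omega] at this)
  · omega
  · omega
  · exact h₁ (by simpa [show b' - b = 1 by omega] using hy b b' hbb hb hb')
  · omega
  · omega
  · omega
  · exact h₁ (by simpa [show a - a' = 1 by omega] using hx a' a haa ha' ha)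
  · have := hx a' a haa ha' ha
    exact hP _ (hy b' b hbb hb' hb) (by rwa [show a - a' = b - b' + 1 by omega] at this)

theorem noConsecutive_image₂_sub (h₁ : 1 ∉ P) (hP : NoConsecutive P) {x y : ℕ → Bool}
    (hx : x ∈ SpacingSubshift P) (hy : y ∈ SpacingSubshift P) (N : ℕ) :
    NoConsecutive (↑(Finset.image₂ (fun a b : ℕ => (b : ℤ) - a)
      ((Finset.range N).filter (x · = true)) ((Finset.range N).filter (y · = true))) : Set ℤ) := by
  simp only [NoConsecutive, Finset.mem_coe, Finset.mem_image₂, Finset.mem_filter]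
  rintro _ ⟨a, ⟨-, ha⟩, b, ⟨-, hb⟩, rfl⟩ ⟨a', ⟨-, ha'⟩, b', ⟨-, hb'⟩, h⟩
  exact sub_ne_sub_add_one_of_mem_spacingSubshift h₁ hP hx hy ha ha' hb hb' h

theorem not_weaklyMixing_sigmaP (hP : NoConsecutive P) : ¬ WeaklyMixing (sigmaP P) := by
  intro h
  have hprod : (fun p : SpacingSubshift P × SpacingSubshift P => (sigmaP P p.1, sigmaP P p.2)) =
      Prod.map (sigmaP P) (sigmaP P) := rfl
  let δ (k : ℕ) : SpacingSubshift P := ⟨_, single_mem_spacingSubshift k⟩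
  obtain ⟨n, hn, _, ⟨p, ⟨hp₁, hp₂⟩, rfl⟩, h₁, h₂⟩ := h (oneCyl P ×ˢ oneCyl P)
    (oneCyl P ×ˢ {x | x.1 1 = true})
    ((isOpen_setOf_apply_eq_true 0).prod (isOpen_setOf_apply_eq_true 0))
    ((isOpen_setOf_apply_eq_true 0).prod (isOpen_setOf_apply_eq_true 1))
    ⟨(δ 0, δ 0), by simp [δ, oneCyl]⟩ ⟨(δ 0, δ 1), by simp [δ, oneCyl]⟩
  simp only [hprod, Prod.map_iterate, Prod.map_fst, Prod.map_snd, mem_ofPred_eq, oneCyl,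
    sigmaP_iterate_apply] at h₁ h₂
  have hn : n ∈ P := by simpa using p.1.2 0 (0 + n) (by omega) hp₁ h₁
  exact hP n hn (by simpa [add_comm] using p.2.2 0 (1 + n) (by omega) hp₂ h₂)

theorem multiTransitive_sigmaP
    (hP : ∀ (m N : ℕ) (u v : Fin m → SpacingSubshift P), ∃ n, N ≤ n ∧
      ∀ (i : Fin m), ∀ a < N, ∀ b < N, (u i).1 a = true → (v i).1 b = true →
        ((i : ℕ) + 1) * n + b - a ∈ P) :
    MultiTransitive (sigmaP P) := by
  intro m _ U V hU hV ⟨u, hu⟩ ⟨v, hv⟩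
  obtain ⟨Nu, hNu⟩ := exists_forall_lt_eq_mem_of_isOpen_pi hU hu
  obtain ⟨Nv, hNv⟩ := exists_forall_lt_eq_mem_of_isOpen_pi hV hv
  obtain ⟨n, hNn, hglue⟩ := hP m (max Nu Nv + 1) u v
  have hn (i : Fin m) : max Nu Nv + 1 ≤ ((i : ℕ) + 1) * n :=
    hNn.trans (Nat.le_mul_of_pos_left n (Nat.succ_pos i))
  let z (i : Fin m) : SpacingSubshift P :=
    ⟨glue (max Nu Nv + 1) ((i + 1) * n) (u i).1 (v i).1,
      glue_mem_spacingSubshift (u i).2 (v i).2 (hn i) (hglue i)⟩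
  refine ⟨n, by omega, _, ⟨z, hNu z fun i j hj => glue_of_lt _ _ (by omega), rfl⟩,
    hNv _ fun i j hj => ?_⟩
  rw [starMap_iterate_apply, sigmaP_iterate_apply]
  exact glue_add _ _ (hn i) (by omega)

end SpacingShift

section Construction

variable (T : ℕ → ℕ × List (Finset ℤ))

def threshold : ℕ → ℕ
  | 0 => 0
  | c + 1 => ((T c).2.length + 1) * (threshold c + 2 * (T c).1 + 2)

def scale (c : ℕ) : ℕ := threshold T c + 2 * (T c).1 + 2

def block (c : ℕ) : Set ℕ :=
  {x | ∃ (i : ℕ) (D : Finset ℤ), (T c).2[i]? = some D ∧ NoConsecutive (D : Set ℤ) ∧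
    ∃ d ∈ D, |d| < (T c).1 ∧ (x : ℤ) = (i + 1) * scale T c + d}

def blockSet : Set ℕ := ⋃ c, block T c

variable {T}

theorem threshold_succ (c : ℕ) : threshold T (c + 1) = ((T c).2.length + 1) * scale T c := rfl

theorem threshold_mono : Monotone (threshold T) := by
  refine monotone_nat_of_le_succ fun c => ?_
  rw [threshold_succ]
  exact le_trans (by unfold scale; omega) (Nat.le_mul_of_pos_left _ (Nat.succ_pos _))

theorem mem_block_bounds {c x : ℕ} (hx : x ∈ block T c) :
    threshold T c + 2 ≤ x ∧ x + 2 ≤ threshold T (c + 1) := by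
  obtain ⟨i, D, hi, -, d, -, hd, hx⟩ := hx
  have hlen : i + 1 ≤ (T c).2.length := (List.getElem?_eq_some_iff.1 hi).1
  have hs : threshold T c + 2 * (T c).1 + 2 = scale T c := rfl
  have := Nat.mul_le_mul_right (scale T c) hlen
  rw [threshold_succ]
  rw [abs_lt] at hd
  constructor <;> zify at * <;> nlinarith

theorem succ_notMem_block {c p : ℕ} (hp : p ∈ block T c) : p + 1 ∉ block T c := by
  obtain ⟨i, D, hi, hD, d, hdD, hd, hp⟩ := hp
  rintro ⟨i', D', hi', -, d', hdD', hd', hp'⟩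
  have hs : 2 * ((T c).1 : ℤ) + 2 ≤ scale T c := by unfold scale; omega
  rw [abs_lt] at hd hd'
  push_cast at hp'
  obtain rfl : i = i' := by
    by_contra hne
    rcases Nat.lt_or_gt_of_ne hne with h | h
    · have : ((i : ℤ) + 2) * scale T c ≤ (i' + 1) * scale T c :=
        mul_le_mul_of_nonneg_right (by omega) (by positivity)
      linarith
    · have : ((i' : ℤ) + 2) * scale T c ≤ (i + 1) * scale T c :=
        mul_le_mul_of_nonneg_right (by omega) (by positivity)
      linarith
  obtain rfl : D = D' := Option.some.inj (hi.symm.trans hi')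
  exact hD d hdD (by rwa [show d + 1 = d' by linarith])

theorem one_notMem_blockSet : 1 ∉ blockSet T := by
  rintro ⟨_, ⟨c, rfl⟩, h⟩
  have := (mem_block_bounds h).1
  omega

theorem noConsecutive_blockSet : NoConsecutive (blockSet T) := by
  rintro p ⟨_, ⟨c, rfl⟩, hc⟩ ⟨_, ⟨c', rfl⟩, hc'⟩
  rcases lt_trichotomy c c' with h | rfl | h
  · have := threshold_mono (T := T) (show _ + 1 ≤ _ from h)
    have := (mem_block_bounds hc).2
    have := (mem_block_bounds hc').1
    omega
  · exact succ_notMem_block hc hc'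
  · have := threshold_mono (T := T) (show _ + 1 ≤ _ from h)
    have := (mem_block_bounds hc').2
    have := (mem_block_bounds hc).1
    omega

theorem exists_glue_blockSet (hT : Surjective T) (m N : ℕ)
    (u v : Fin m → SpacingSubshift (blockSet T)) :
    ∃ n, N ≤ n ∧ ∀ (i : Fin m), ∀ a < N, ∀ b < N, (u i).1 a = true → (v i).1 b = true →
      ((i : ℕ) + 1) * n + b - a ∈ blockSet T := by
  let D (i : Fin m) : Finset ℤ := Finset.image₂ (fun a b : ℕ => (b : ℤ) - a)
    ((Finset.range N).filter ((u i).1 · = true)) ((Finset.range N).filter ((v i).1 · = true))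
  obtain ⟨c, hc⟩ := hT (N, List.ofFn D)
  have hN : N ≤ scale T c := by unfold scale; rw [hc]; omega
  refine ⟨scale T c, hN, fun i a ha b hb hua hvb =>
    mem_iUnion.2 ⟨c, i, D i, ?_, ?_, b - a, ?_, ?_, ?_⟩⟩
  · simp [hc]
  · exact noConsecutive_image₂_sub one_notMem_blockSet noConsecutive_blockSet
      (u i).2 (v i).2 N
  · exact Finset.mem_image₂.2 ⟨a, by simp [ha, hua], b, by simp [hb, hvb], rfl⟩
  · rw [hc, abs_lt]; omega
  · have : scale T c ≤ ((i : ℕ) + 1) * scale T c := Nat.le_mul_of_pos_left _ (by omega)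
    rw [Nat.cast_sub (by omega)]
    push_cast
    ring

end Construction

/-- There is a set `P ⊆ ℕ` such that the spacing shift `σ_P` is
multi-transitive but not weakly mixing. -/
theorem statement9 :
    ∃ P : Set ℕ, MultiTransitive (sigmaP P) ∧ ¬ WeaklyMixing (sigmaP P) := by
  obtain ⟨T, hT⟩ := exists_surjective_nat (ℕ × List (Finset ℤ))
  exact ⟨blockSet T, multiTransitive_sigmaP (exists_glue_blockSet hT),
    not_weaklyMixing_sigmaP noConsecutive_blockSet⟩
end

section
/- Let X be a compact metric space and f : X → X a weakly mixing continuous map. Then for every nonempty open set U ⊆ X and every positive integer n there exist positive integers m and k such that m + i·k ∈ N(U,U;f) for every i = 1, …, n−1, i.e., f^{m+ik}(U) ∩ U ≠ ∅ for all such i. -/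
open Set Function

/-!
For a weakly mixing map the hitting-time sets `N(U, V)` of pairs of nonempty open sets form a
filter base (Furstenberg), and each `N(U, f⁻ⁱ U)` belongs to the generated filter because `f`
has dense range. A common element `t` of `N(U, f⁻ⁱ U)` for `i < n` then satisfies
`t + i ∈ N(U, U)`, so `m = t` and `k = 1` work.
-/

section

open Filter

variable {X : Type*} {f : X → X}

lemma add_mem_nset_of_mem_nset_preimage {U V : Set X} {t i : ℕ}
    (ht : t ∈ NSet f U (f^[i] ⁻¹' V)) : t + i ∈ NSet f U V := by
  obtain ⟨htpos, _, ⟨x, hxU, rfl⟩, hx⟩ := ht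
  refine ⟨by omega, f^[t + i] x, mem_image_of_mem _ hxU, ?_⟩
  rwa [add_comm, iterate_add_apply]

variable [TopologicalSpace X]

lemma TopTransitive.denseRange (h : TopTransitive f) : DenseRange f := by
  refine dense_iff_inter_open.2 fun V hV hVne => ?_
  have : Nonempty X := hVne.to_subtype.map Subtype.val
  obtain ⟨n, hn, _, ⟨x, -, rfl⟩, hx⟩ := h univ V isOpen_univ hV univ_nonempty hVne
  obtain ⟨k, rfl⟩ := Nat.exists_eq_add_of_lt hn
  rw [iterate_succ_apply'] at hx
  exact ⟨_, hx, mem_range_self _⟩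

lemma DenseRange.iterate (hd : DenseRange f) (hf : Continuous f) (n : ℕ) :
    DenseRange f^[n] := by
  induction n with
  | zero => exact denseRange_id
  | succ n ih => rw [iterate_succ]; exact ih.comp hd (hf.iterate n)

lemma WeaklyMixing.exists_iterate_mem_prod (hwm : WeaklyMixing f) {U₁ U₂ V₁ V₂ : Set X}
    (hU₁ : IsOpen U₁) (hU₂ : IsOpen U₂) (hV₁ : IsOpen V₁) (hV₂ : IsOpen V₂)
    (hU₁ne : U₁.Nonempty) (hU₂ne : U₂.Nonempty) (hV₁ne : V₁.Nonempty) (hV₂ne : V₂.Nonempty) :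
    ∃ n, 0 < n ∧ ∃ x ∈ U₁, ∃ y ∈ U₂, f^[n] x ∈ V₁ ∧ f^[n] y ∈ V₂ := by
  have hprod : TopTransitive (Prod.map f f) := hwm
  obtain ⟨n, hn, _, ⟨⟨x, y⟩, ⟨hx, hy⟩, rfl⟩, hxV, hyV⟩ :=
    hprod _ _ (hU₁.prod hU₂) (hV₁.prod hV₂) (hU₁ne.prod hU₂ne) (hV₁ne.prod hV₂ne)
  rw [Prod.map_iterate] at hxV hyV
  exact ⟨n, hn, x, hx, y, hy, hxV, hyV⟩

lemma WeaklyMixing.topTransitive (hwm : WeaklyMixing f) : TopTransitive f := by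
  intro U V hU hV hUne hVne
  obtain ⟨n, hn, x, hx, -, -, hxV, -⟩ :=
    hwm.exists_iterate_mem_prod hU hU hV hV hUne hUne hVne hVne
  exact ⟨n, hn, f^[n] x, mem_image_of_mem _ hx, hxV⟩

/-- Furstenberg's intersection lemma. -/
lemma WeaklyMixing.isBasis_nset [Nonempty X] (hf : Continuous f) (hwm : WeaklyMixing f) :
    IsBasis (fun p : Set X × Set X => IsOpen p.1 ∧ IsOpen p.2 ∧ p.1.Nonempty ∧ p.2.Nonempty)
      (fun p => NSet f p.1 p.2) where
  nonempty := ⟨(univ, univ), isOpen_univ, isOpen_univ, univ_nonempty, univ_nonempty⟩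
  inter := by
    rintro ⟨U₁, V₁⟩ ⟨U₂, V₂⟩ ⟨hU₁, hV₁, hU₁ne, hV₁ne⟩ ⟨hU₂, hV₂, hU₂ne, hV₂ne⟩
    -- `n` carries `U₁ × V₁` into `U₂ × V₂`; pulling back along `f^[n]` merges the two pairs.
    obtain ⟨n, -, x, hx, y, hy, hxU, hyV⟩ :=
      hwm.exists_iterate_mem_prod hU₁ hV₁ hU₂ hV₂ hU₁ne hV₁ne hU₂ne hV₂ne
    refine ⟨(U₁ ∩ f^[n] ⁻¹' U₂, V₁ ∩ f^[n] ⁻¹' V₂),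
      ⟨hU₁.inter (hU₂.preimage (hf.iterate n)), hV₁.inter (hV₂.preimage (hf.iterate n)),
        ⟨x, hx, hxU⟩, ⟨y, hy, hyV⟩⟩, ?_⟩
    rintro m ⟨hm, _, ⟨z, ⟨hzU₁, hzU₂⟩, rfl⟩, hzV₁, hzV₂⟩
    refine ⟨⟨hm, _, mem_image_of_mem _ hzU₁, hzV₁⟩, hm, f^[m] (f^[n] z),
      mem_image_of_mem _ hzU₂, ?_⟩
    rwa [← iterate_add_apply, add_comm, iterate_add_apply]

end

theorem statement17_general {X : Type*} [MetricSpace X] (f : X → X)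
    (hf : Continuous f) (hwm : WeaklyMixing f) :
    ∀ U : Set X, IsOpen U → U.Nonempty → ∀ n : ℕ, 1 ≤ n →
      ∃ m k : ℕ, 0 < m ∧ 0 < k ∧
        ∀ i : ℕ, 1 ≤ i → i ≤ n - 1 → (f^[m + i * k] '' U ∩ U).Nonempty := by
  intro U hU hUne n hn
  have : Nonempty X := hUne.to_subtype.map Subtype.val
  have hB := (hwm.isBasis_nset hf).hasBasis
  have : Filter.NeBot (hwm.isBasis_nset hf).filter :=
    hB.neBot_iff.2 fun ⟨hU, hV, hUne, hVne⟩ => hwm.topTransitive _ _ hU hV hUne hVne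
  have hmem (i : ℕ) : NSet f U (f^[i] ⁻¹' U) ∈ (hwm.isBasis_nset hf).filter :=
    hB.mem_of_superset (i := (U, f^[i] ⁻¹' U)) ⟨hU, hU.preimage (hf.iterate i), hUne,
      (hwm.topTransitive.denseRange.iterate hf i).exists_mem_open hU hUne⟩
      subset_rfl
  obtain ⟨t, ht⟩ := ((Filter.eventually_all_finset (Finset.range n)).2 fun i _ => hmem i).exists
  refine ⟨t, 1, (ht 0 (Finset.mem_range.2 hn)).1, one_pos, fun i _ hi => ?_⟩
  rw [mul_one]
  exact (add_mem_nset_of_mem_nset_preimage (ht i (Finset.mem_range.2 (by omega)))).2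

/-- If `f` is weakly mixing, then for every nonempty open `U` and every
`n ≥ 1` there are positive integers `m, k` such that `f^{m+ik}(U) ∩ U ≠ ∅` for every
`i = 1, …, n-1`. -/
theorem statement17 {X : Type*} [MetricSpace X] [CompactSpace X] (f : X → X)
    (hf : Continuous f) (hwm : WeaklyMixing f) :
    ∀ U : Set X, IsOpen U → U.Nonempty → ∀ n : ℕ, 1 ≤ n →
      ∃ m k : ℕ, 0 < m ∧ 0 < k ∧
        ∀ i : ℕ, 1 ≤ i → i ≤ n - 1 → (f^[m + i * k] '' U ∩ U).Nonempty :=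
  statement17_general f hf hwm
end
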